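/- If |T| < 2√(n+1), then for every nonempty proper subset S of T, the cell V_T(S) is either empty or unbounded. -/

import Mathlib

/-!
Each pair `s ∈ S`, `t ∈ T \ S` cuts the cell down to the half-space
`⟪x, t - s⟫ ≤ (‖t‖² - ‖s‖²) / 2`, so `V_T(S)` is cut out by `|S| · |T \ S| ≤ (|T| / 2)² < n + 1`
half-spaces. At most `n` homogeneous constraints `⟪t - s, v⟫ ≤ 0` always have a common nonzero
solution `v`: one of them is met by `v` or `-v` for any `v` orthogonal to the span of the others,
which is a proper subspace. A nonempty cell then contains the ray `x + c • v`, `c ≥ 0`.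
-/

open Finset Metric
open scoped Classical

/-- The multipoint (higher-order) Voronoi cell of `S` within the set of sites `T`. -/
def vcell {n : ℕ} (T S : Finset (EuclideanSpace ℝ (Fin n))) :
    Set (EuclideanSpace ℝ (Fin n)) :=
  {x | ∀ s ∈ S, ∀ t ∈ T \ S, dist x s ≤ dist x t}

theorem Nat.mul_le_of_add_lt_two_mul_sqrt {a b n : ℕ}
    (h : (a + b : ℝ) < 2 * Real.sqrt (n + 1)) : a * b ≤ n := by
  have hsq : Real.sqrt (n + 1) ^ 2 = n + 1 := Real.sq_sqrt (by positivity)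
  have hab : (a * b : ℝ) < n + 1 := by
    nlinarith [sq_nonneg ((a : ℝ) - b), Real.sqrt_nonneg (n + 1)]
  exact Nat.lt_succ_iff.mp (by exact_mod_cast hab)

section InnerProductSpace

variable {E : Type*} [NormedAddCommGroup E] [InnerProductSpace ℝ E]

theorem exists_ne_zero_forall_inner_eq_zero [FiniteDimensional ℝ E] (B : Finset E)
    (hB : B.card < Module.finrank ℝ E) : ∃ v ≠ (0 : E), ∀ b ∈ B, inner ℝ b v = 0 := by
  have hspan : Submodule.span ℝ (B : Set E) ≠ ⊤ := fun htop => by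
    have := finrank_span_finset_le_card (R := ℝ) B
    rw [Set.finrank, htop, finrank_top] at this
    omega
  obtain ⟨v, hv, hv0⟩ := (Submodule.ne_bot_iff _).mp
    (mt Submodule.orthogonal_eq_bot_iff.mp hspan)
  exact ⟨v, hv0, fun b hb => Submodule.inner_right_of_mem_orthogonal
    (Submodule.subset_span hb) hv⟩

theorem exists_ne_zero_forall_inner_nonpos [FiniteDimensional ℝ E] [Nontrivial E]
    (A : Finset E) (hA : A.card ≤ Module.finrank ℝ E) :
    ∃ v ≠ (0 : E), ∀ a ∈ A, inner ℝ a v ≤ 0 := by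
  rcases A.eq_empty_or_nonempty with rfl | ⟨a₀, ha₀⟩
  · obtain ⟨v, hv⟩ := exists_ne (0 : E)
    exact ⟨v, hv, by simp⟩
  obtain ⟨v, hv0, hv⟩ := exists_ne_zero_forall_inner_eq_zero (A.erase a₀)
    (by rw [card_erase_of_mem ha₀]; have := A.card_pos.mpr ⟨a₀, ha₀⟩; omega)
  have hA_erase : ∀ a ∈ A, a ≠ a₀ → inner ℝ a v = 0 := fun a ha hne =>
    hv a (mem_erase.mpr ⟨hne, ha⟩)
  rcases le_total (inner ℝ a₀ v) 0 with hle | hge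
  · refine ⟨v, hv0, fun a ha => ?_⟩
    by_cases h : a = a₀
    · exact h ▸ hle
    · exact (hA_erase a ha h).le
  · refine ⟨-v, neg_ne_zero.mpr hv0, fun a ha => ?_⟩
    rw [inner_neg_right, neg_nonpos]
    by_cases h : a = a₀
    · exact h ▸ hge
    · exact (hA_erase a ha h).ge

theorem dist_add_smul_le_dist_add_smul {x s t v : E} {c : ℝ} (hc : 0 ≤ c)
    (hst : dist x s ≤ dist x t) (hv : inner ℝ (t - s) v ≤ 0) :
    dist (x + c • v) s ≤ dist (x + c • v) t := by
  have expand : ∀ y, ‖x + c • v - y‖ ^ 2 =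
      ‖x - y‖ ^ 2 + 2 * c * inner ℝ (x - y) v + c ^ 2 * ‖v‖ ^ 2 := fun y => by
    rw [show x + c • v - y = (x - y) + c • v by abel, norm_add_sq_real, real_inner_smul_right,
      norm_smul, mul_pow, Real.norm_eq_abs, sq_abs]
    ring
  have hinner : inner ℝ (x - s) v - inner ℝ (x - t) v = inner ℝ (t - s) v := by
    rw [← inner_sub_left, sub_sub_sub_cancel_left]
  rw [dist_eq_norm, dist_eq_norm] at hst ⊢
  refine pow_le_pow_iff_left₀ (norm_nonneg _) (norm_nonneg _) two_ne_zero |>.mp ?_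
  rw [expand, expand]
  nlinarith [pow_le_pow_left₀ (norm_nonneg _) hst 2, mul_nonneg hc (neg_nonneg.mpr hv)]

theorem not_isBounded_of_forall_add_smul_mem {C : Set E} {x v : E} (hv : v ≠ 0)
    (hC : ∀ c : ℝ, 0 ≤ c → x + c • v ∈ C) : ¬ Bornology.IsBounded C := by
  rintro hB
  obtain ⟨r, hr⟩ := hB.subset_closedBall x
  have hvpos : 0 < ‖v‖ := norm_pos_iff.mpr hv
  set c := (|r| + 1) / ‖v‖
  have hdist : dist (x + c • v) x = |r| + 1 := by
    rw [dist_eq_norm, add_sub_cancel_left, norm_smul, Real.norm_of_nonneg (by positivity),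
      div_mul_cancel₀ _ hvpos.ne']
  have := mem_closedBall.mp (hr (hC c (by positivity)))
  linarith [le_abs_self r]

end InnerProductSpace

theorem vcell_add_smul_mem {n : ℕ} {T S : Finset (EuclideanSpace ℝ (Fin n))}
    {x v : EuclideanSpace ℝ (Fin n)} (hx : x ∈ vcell T S)
    (hv : ∀ s ∈ S, ∀ t ∈ T \ S, inner ℝ (t - s) v ≤ 0) {c : ℝ} (hc : 0 ≤ c) :
    x + c • v ∈ vcell T S := fun s hs t ht =>
  dist_add_smul_le_dist_add_smul hc (hx s hs t ht) (hv s hs t ht)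

theorem stmt_8 {n : ℕ} (T : Finset (EuclideanSpace ℝ (Fin n)))
    (hcard : (T.card : ℝ) < 2 * Real.sqrt (n + 1)) :
    ∀ S : Finset (EuclideanSpace ℝ (Fin n)), S.Nonempty → S ⊂ T →
      vcell T S = ∅ ∨ ¬ Bornology.IsBounded (vcell T S) := by
  intro S hS hST
  rcases (vcell T S).eq_empty_or_nonempty with hempty | ⟨x, hx⟩
  · exact Or.inl hempty
  right
  have hTS : (T \ S).Nonempty := sdiff_nonempty.mpr (not_subset_of_ssubset hST)
  have hpairs : S.card * (T \ S).card ≤ n := by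
    refine Nat.mul_le_of_add_lt_two_mul_sqrt ?_
    rwa [← Nat.cast_add, add_comm, card_sdiff_add_card_eq_card hST.subset]
  have : NeZero n := ⟨by nlinarith [hS.card_pos, hTS.card_pos]⟩
  obtain ⟨v, hv0, hv⟩ := exists_ne_zero_forall_inner_nonpos
    (image₂ (fun s t => t - s) S (T \ S))
    ((card_image₂_le _ _ _).trans (by simpa using hpairs))
  exact not_isBounded_of_forall_add_smul_mem hv0 fun c hc =>
    vcell_add_smul_mem hx (fun s hs t ht => hv _ (mem_image₂_of_mem hs ht)) hc
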